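/- Let G = (M, w) be a weighted graph with m ≥ 2 vertices, and let x* minimize Σ_e x(e) over the set Γ = {x : 0 ≤ x ≤ w, I(x) = I(w)} of capacity-preserving fractional packings (where I(x) = min_{|P|≥2} (1/(|P|−1)) Σ_{e∈E_P} x(e)). Then Σ_e x*(e) − I(w) = (m−2) · I(w). -/

import Mathlib

open Finset
open scoped Classical

/-- `I_P(x) = (1/(|P|-1)) ∑_{e ∈ E_P} x e`, `E_P` = edges crossing the partition `P`. -/
noncomputable def IP {M : Type*} [Fintype M] [DecidableEq M] (x : Finset M → ℝ)
    (P : Finpartition (Finset.univ : Finset M)) : ℝ :=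
  ((P.parts.card : ℝ) - 1)⁻¹ *
    ∑ e ∈ Finset.univ.filter (fun e : Finset M => ¬ ∃ A ∈ P.parts, e ⊆ A), x e

/-- Multivariate mutual information `I(x) = min_{|P| ≥ 2} I_P(x)`. -/
noncomputable def MMI {M : Type*} [Fintype M] [DecidableEq M] (x : Finset M → ℝ) : ℝ :=
  sInf {r : ℝ | ∃ P : Finpartition (Finset.univ : Finset M), 2 ≤ P.parts.card ∧ r = IP x P}

/-- The set `Γ` of capacity-preserving fractional packings of the weighted graph `(M, w)`. -/
def Gamma {M : Type*} [Fintype M] [DecidableEq M] (w : Finset M → ℝ) :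
    Set (Finset M → ℝ) :=
  {x | (∀ e, 0 ≤ x e) ∧ (∀ e, x e ≤ w e) ∧ MMI x = MMI w}

/-! The singleton partition gives `(m - 1) I(w) ≤ ∑ x*` for every `x* ∈ Γ`. Conversely, any
`w ≥ 0` whose cuts satisfy `w(δP) ≥ (|P| - 1) μ` contains a fractional packing of `μ` spanning
hypertrees, i.e. some `x ≤ w` with the same cut bounds and total weight at most `(m - 1) μ`; for
`μ = I(w)` this `x` lies in `Γ`. The packing is built by induction on the vertex set: a partition
`P` minimising `w(δP) / (|P| - 1) =: μ` is tight, its parts inherit the cut bound at level `μ`,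
and `w` on `δP` glued with packings of the parts satisfies every cut bound by the semimodular
inequality `|P| + |Q| ≤ |P ∨ Q| + |P ∧ Q|` of the partition lattice; scaling by `ν / μ`
brings the packing down to any level `ν ≤ μ`. -/

namespace Finpartition

variable {α : Type*} [DecidableEq α] {s A B B' : Finset α}

def crossing (P : Finpartition s) : Finset (Finset α) :=
  s.powerset.filter fun e => ¬ ∃ A ∈ P.parts, e ⊆ A

lemma mem_crossing {P : Finpartition s} {e : Finset α} :
    e ∈ P.crossing ↔ e ⊆ s ∧ ¬ ∃ A ∈ P.parts, e ⊆ A := by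
  simp [crossing]

lemma crossing_subset_powerset (P : Finpartition s) : P.crossing ⊆ s.powerset :=
  filter_subset _ _

lemma nonempty_of_mem_crossing (hs : s.Nonempty) {P : Finpartition s} {e : Finset α}
    (he : e ∈ P.crossing) : e.Nonempty := by
  rw [nonempty_iff_ne_empty]
  rintro rfl
  obtain ⟨A, hA⟩ := P.parts_nonempty hs.ne_empty
  exact (mem_crossing.1 he).2 ⟨A, hA, empty_subset A⟩

lemma crossing_anti : Antitone (crossing (s := s)) := by
  intro P Q hPQ e he
  rw [mem_crossing] at he ⊢
  refine ⟨he.1, fun ⟨A, hA, heA⟩ => ?_⟩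
  obtain ⟨C, hC, hAC⟩ := hPQ hA
  exact he.2 ⟨C, hC, heA.trans hAC⟩

lemma card_restrict_parts (Q : Finpartition s) (h : A ⊆ s) :
    #(Q.restrict h).parts = #{B ∈ Q.parts | ¬Disjoint A B} := by
  have key := Q.sum_restrict h (fun C => if C.Nonempty then 1 else 0) (by simp)
  rw [sum_boole, sum_boole, filter_true_of_mem
    fun C hC => (Q.restrict h).nonempty_of_mem_parts hC] at key
  push_cast at key
  rw [key]
  congr 1
  ext B
  simp [not_disjoint_iff_nonempty_inter, inter_comm]

lemma crossing_restrict_subset (Q : Finpartition s) (h : A ⊆ s) (hA : A.Nonempty) :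
    (Q.restrict h).crossing ⊆ Q.crossing := by
  intro e he
  have he_ne := nonempty_of_mem_crossing hA he
  rw [mem_crossing] at he ⊢
  refine ⟨he.1.trans h, fun ⟨B, hB, heB⟩ => he.2 ⟨B ∩ A, ?_, subset_inter heB he.1⟩⟩
  refine mem_erase.2 ⟨?_, mem_image_of_mem _ hB⟩
  exact (he_ne.mono (subset_inter heB he.1)).ne_empty

lemma ssubset_of_mem_parts {P : Finpartition s} (hP : 2 ≤ #P.parts) (hA : A ∈ P.parts) :
    A ⊂ s := by
  obtain ⟨B, hB, hBA⟩ := exists_mem_ne hP A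
  obtain ⟨b, hb⟩ := P.nonempty_of_mem_parts hB
  exact (ssubset_iff_of_subset (P.le hA)).2
    ⟨b, P.le hB hb, disjoint_left.1 (P.disjoint hB hA hBA) hb⟩

def mergeParts (Q : Finpartition s) (hB : B ∈ Q.parts) (hB' : B' ∈ Q.parts) :
    Finpartition s where
  parts := insert (B ∪ B') (Q.parts \ {B, B'})
  supIndep := by
    rw [supIndep_iff_pairwiseDisjoint]
    have key : ∀ C ∈ Q.parts \ {B, B'}, Disjoint (B ∪ B') C := by
      intro C hC
      simp only [mem_sdiff, mem_insert, mem_singleton, not_or] at hC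
      exact disjoint_union_left.2
        ⟨Q.disjoint hB hC.1 (Ne.symm hC.2.1), Q.disjoint hB' hC.1 (Ne.symm hC.2.2)⟩
    rw [coe_insert]
    refine (Q.disjoint.subset ?_).insert fun C hC _ => key C hC
    exact coe_subset.2 sdiff_subset
  sup_parts := by
    ext a
    simp only [sup_insert, id, sup_eq_union, mem_union, mem_sup,
      mem_sdiff, mem_insert, mem_singleton, not_or]
    constructor
    · rintro ((ha | ha) | ⟨C, hC, ha⟩)
      exacts [Q.le hB ha, Q.le hB' ha, Q.le hC.1 ha]
    · intro ha
      obtain ⟨C, hC, haC⟩ := Q.exists_mem ha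
      by_cases hCB : C = B
      · exact Or.inl (Or.inl (hCB ▸ haC))
      by_cases hCB' : C = B'
      · exact Or.inl (Or.inr (hCB' ▸ haC))
      exact Or.inr ⟨C, ⟨hC, hCB, hCB'⟩, haC⟩
  bot_notMem := by
    simp only [mem_insert, mem_sdiff, not_or]
    refine ⟨fun h => ?_, fun h => Q.bot_notMem h.1⟩
    exact (Q.nonempty_of_mem_parts hB).ne_empty (union_eq_empty.1 h.symm).1

lemma union_notMem_sdiff (Q : Finpartition s) (hB : B ∈ Q.parts) :
    B ∪ B' ∉ Q.parts \ {B, B'} := by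
  simp only [mem_sdiff, mem_insert, mem_singleton, not_and, not_or]
  intro hU hUB
  have hdisj := Q.disjoint hB hU (Ne.symm hUB)
  obtain ⟨a, ha⟩ := Q.nonempty_of_mem_parts hB
  exact (disjoint_left.1 hdisj ha (mem_union_left _ ha)).elim

lemma card_mergeParts (Q : Finpartition s) (hB : B ∈ Q.parts) (hB' : B' ∈ Q.parts)
    (hne : B ≠ B') : #(Q.mergeParts hB hB').parts + 1 = #Q.parts := by
  have hsub : {B, B'} ⊆ Q.parts := insert_subset hB (singleton_subset_iff.2 hB')
  have := card_sdiff_add_card_eq_card hsub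
  rw [card_pair hne] at this
  change #(insert (B ∪ B') (Q.parts \ {B, B'})) + 1 = _
  rw [card_insert_of_notMem (Q.union_notMem_sdiff hB)]
  omega

lemma le_mergeParts (Q : Finpartition s) (hB : B ∈ Q.parts) (hB' : B' ∈ Q.parts) :
    Q ≤ Q.mergeParts hB hB' := by
  intro C hC
  by_cases h : C = B ∨ C = B'
  · refine ⟨B ∪ B', mem_insert_self _ _, ?_⟩
    rcases h with rfl | rfl
    exacts [subset_union_left, subset_union_right]
  · refine ⟨C, mem_insert_of_mem ?_, le_rfl⟩
    simpa [not_or] using And.intro hC h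

lemma card_filter_mergeParts (Q : Finpartition s) (hB : B ∈ Q.parts) (hB' : B' ∈ Q.parts)
    (hne : B ≠ B') (A : Finset α) :
    #{C ∈ (Q.mergeParts hB hB').parts | ¬Disjoint A C}
      + (if ¬Disjoint A B ∧ ¬Disjoint A B' then 1 else 0) = #{C ∈ Q.parts | ¬Disjoint A C} := by
  have hQ : Q.parts = insert B (insert B' (Q.parts \ {B, B'})) := by
    rw [insert_eq, insert_eq, ← union_assoc, ← insert_eq,
      union_sdiff_of_subset (insert_subset hB (singleton_subset_iff.2 hB'))]
  change #{C ∈ insert (B ∪ B') (Q.parts \ {B, B'}) | ¬Disjoint A C} + _ = _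
  conv_rhs => rw [hQ]
  simp only [filter_insert, disjoint_union_right, not_and_or]
  by_cases h₁ : Disjoint A B <;> by_cases h₂ : Disjoint A B' <;>
    simp [h₁, h₂, hne, card_insert_of_notMem, Q.union_notMem_sdiff hB]

lemma exists_part_not_disjoint (Q : Finpartition s) {P : Finpartition s} (hA : A ∈ P.parts) :
    ∃ B ∈ Q.parts, ¬Disjoint A B := by
  obtain ⟨a, ha⟩ := P.nonempty_of_mem_parts hA
  obtain ⟨B, hB, haB⟩ := Q.exists_mem (P.le hA ha)
  exact ⟨B, hB, not_disjoint_iff.2 ⟨a, ha, haB⟩⟩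

/-- The sum is `#(P ⊓ Q).parts`, so this is the semimodular inequality of the partition
lattice. -/
theorem exists_common_coarsening (P Q : Finpartition s) :
    ∃ R : Finpartition s, P ≤ R ∧ Q ≤ R ∧
      #P.parts + #Q.parts ≤ #R.parts + ∑ A ∈ P.parts, #{B ∈ Q.parts | ¬Disjoint A B} := by
  induction hn : #Q.parts using Nat.strong_induction_on generalizing Q with
  | _ n ih =>
  by_cases hcross : ∃ A ∈ P.parts, ∃ B ∈ Q.parts, ∃ B' ∈ Q.parts,
      B ≠ B' ∧ ¬Disjoint A B ∧ ¬Disjoint A B'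
  · obtain ⟨A, hA, B, hB, B', hB', hne, h₁, h₂⟩ := hcross
    have hcard := Q.card_mergeParts hB hB' hne
    obtain ⟨R, hPR, hQR, hR⟩ := ih _ (by omega) (Q.mergeParts hB hB') rfl
    refine ⟨R, hPR, (Q.le_mergeParts hB hB').trans hQR, ?_⟩
    have hcount := sum_congr rfl fun A (_ : A ∈ P.parts) =>
      Q.card_filter_mergeParts hB hB' hne A
    rw [sum_add_distrib] at hcount
    have hone : 1 ≤ ∑ A ∈ P.parts, if ¬Disjoint A B ∧ ¬Disjoint A B' then 1 else 0 :=
      (single_le_sum (fun _ _ => Nat.zero_le _) hA).trans' (by simp [h₁, h₂])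
    omega
  · simp only [not_exists, not_and] at hcross
    have hPQ : P ≤ Q := by
      intro A hA
      obtain ⟨B, hB, hAB⟩ := Q.exists_part_not_disjoint hA
      refine ⟨B, hB, fun x hx => ?_⟩
      obtain ⟨C, hC, hxC⟩ := Q.exists_mem (P.le hA hx)
      by_contra hxB
      exact hcross A hA C hC B hB (fun h => hxB (h ▸ hxC))
        (not_disjoint_iff.2 ⟨x, hx, hxC⟩) hAB
    have hP : #P.parts ≤ ∑ A ∈ P.parts, #{B ∈ Q.parts | ¬Disjoint A B} := by
      rw [card_eq_sum_ones]
      refine sum_le_sum fun A hA => card_pos.2 ?_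
      obtain ⟨B, hB, hAB⟩ := Q.exists_part_not_disjoint hA
      exact ⟨B, mem_filter.2 ⟨hB, hAB⟩⟩
    exact ⟨Q, hPQ, le_rfl, by omega⟩

def replacePart (P : Finpartition s) (hA : A ∈ P.parts) (Q : Finpartition A) :
    Finpartition s where
  parts := Q.parts ∪ P.parts.erase A
  supIndep := by
    rw [supIndep_iff_pairwiseDisjoint, coe_union]
    refine Q.disjoint.union (P.disjoint.subset (coe_subset.2 (erase_subset _ _)))
      fun B hB C hC _ => ?_
    obtain ⟨hCA, hC⟩ := mem_erase.1 hC
    exact (P.disjoint hA hC (Ne.symm hCA)).mono_left (Q.le hB)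
  sup_parts := by
    rw [sup_union, Q.sup_parts]
    conv_rhs => rw [← P.sup_parts, ← insert_erase hA, sup_insert]
    rfl
  bot_notMem := by
    simp only [mem_union, mem_erase, not_or]
    exact ⟨Q.bot_notMem, fun h => P.bot_notMem h.2⟩

lemma card_replacePart (P : Finpartition s) (hA : A ∈ P.parts) (Q : Finpartition A) :
    #(P.replacePart hA Q).parts + 1 = #Q.parts + #P.parts := by
  have hdisj : Disjoint Q.parts (P.parts.erase A) := by
    refine disjoint_left.2 fun C hC hC' => ?_
    obtain ⟨hCA, hC'⟩ := mem_erase.1 hC'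
    obtain ⟨a, ha⟩ := Q.nonempty_of_mem_parts hC
    exact disjoint_left.1 (P.disjoint hC' hA hCA) ha (Q.le hC ha)
  change #(Q.parts ∪ P.parts.erase A) + 1 = _
  rw [card_union_of_disjoint hdisj, card_erase_of_mem hA]
  have := card_pos.2 ⟨A, hA⟩
  omega

lemma crossing_replacePart_subset (P : Finpartition s) (hA : A ∈ P.parts)
    (Q : Finpartition A) : (P.replacePart hA Q).crossing ⊆ P.crossing ∪ Q.crossing := by
  intro e he
  rw [mem_crossing] at he
  rw [mem_union, mem_crossing, mem_crossing]
  by_contra! h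
  obtain ⟨B, hB, heB⟩ := h.1 he.1
  have hBA : B = A := by
    by_contra hBA
    exact he.2 ⟨B, mem_union_right _ (mem_erase.2 ⟨hBA, hB⟩), heB⟩
  obtain ⟨C, hC, heC⟩ := h.2 (hBA ▸ heB)
  exact he.2 ⟨C, mem_union_left _ hC, heC⟩

end Finpartition

section TreePacking

open Finpartition

variable {α : Type*} [DecidableEq α] {s A : Finset α} {μ ν : ℝ} {w x : Finset α → ℝ}

def CutBound (s : Finset α) (μ : ℝ) (x : Finset α → ℝ) : Prop :=
  ∀ P : Finpartition s, ((#P.parts : ℝ) - 1) * μ ≤ ∑ e ∈ P.crossing, x e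

lemma cutBound_of_two_le (hs : s.Nonempty) (hx : ∀ e, 0 ≤ x e)
    (h : ∀ P : Finpartition s, 2 ≤ #P.parts →
      ((#P.parts : ℝ) - 1) * μ ≤ ∑ e ∈ P.crossing, x e) :
    CutBound s μ x := by
  intro P
  by_cases hP : 2 ≤ #P.parts
  · exact h P hP
  have hP1 : #P.parts = 1 := by
    have := card_pos.2 (P.parts_nonempty hs.ne_empty)
    omega
  rw [hP1, Nat.cast_one, sub_self, zero_mul]
  exact sum_nonneg fun e _ => hx e

/-- A fractional packing of `μ` spanning hypertrees of `s` under the capacities `w`. -/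
structure IsTreePacking (s : Finset α) (μ : ℝ) (w x : Finset α → ℝ) : Prop where
  nonneg : ∀ e, 0 ≤ x e
  le : ∀ e, x e ≤ w e
  support : ∀ e, x e ≠ 0 → e ⊆ s ∧ e.Nonempty
  cutBound : CutBound s μ x
  sum_le : ∑ e ∈ s.powerset, x e ≤ ((#s : ℝ) - 1) * μ

lemma isTreePacking_zero_of_card_eq_one (hw : ∀ e, 0 ≤ w e) (hμ : 0 ≤ μ) (hs : #s = 1) :
    IsTreePacking s μ w 0 where
  nonneg _ := le_rfl
  le := hw
  support _ h := absurd rfl h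
  cutBound P := by
    have : (#P.parts : ℝ) ≤ 1 := by exact_mod_cast hs ▸ P.card_parts_le_card
    simp only [Pi.zero_apply, sum_const_zero]
    nlinarith
  sum_le := by simp [hs]

lemma IsTreePacking.const_mul (h : IsTreePacking s μ w x) {c : ℝ} (hc₀ : 0 ≤ c) (hc₁ : c ≤ 1) :
    IsTreePacking s (c * μ) w (fun e => c * x e) where
  nonneg e := mul_nonneg hc₀ (h.nonneg e)
  le e := (mul_le_of_le_one_left (h.nonneg e) hc₁).trans (h.le e)
  support e he := h.support e (right_ne_zero_of_mul he)
  cutBound P := by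
    rw [← mul_sum, mul_left_comm]
    exact mul_le_mul_of_nonneg_left (h.cutBound P) hc₀
  sum_le := by
    rw [← mul_sum, mul_left_comm]
    exact mul_le_mul_of_nonneg_left h.sum_le hc₀

lemma IsTreePacking.exists_of_le (h : IsTreePacking s μ w x) (hν : 0 ≤ ν) (hνμ : ν ≤ μ) :
    ∃ y, IsTreePacking s ν w y := by
  rcases hνμ.eq_or_lt with rfl | hlt
  · exact ⟨x, h⟩
  have hμ : 0 < μ := hν.trans_lt hlt
  have hy := h.const_mul (div_nonneg hν hμ.le) ((div_le_one hμ).2 hνμ)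
  rw [div_mul_cancel₀ ν hμ.ne'] at hy
  exact ⟨_, hy⟩

lemma exists_tight_partition (hs : 2 ≤ #s) (hw : ∀ e, 0 ≤ w e) :
    ∃ P : Finpartition s, 2 ≤ #P.parts ∧
      ∃ μ, ∑ e ∈ P.crossing, w e = ((#P.parts : ℝ) - 1) * μ ∧ CutBound s μ w := by
  have hpos : ∀ Q : Finpartition s, 2 ≤ #Q.parts → (0 : ℝ) < (#Q.parts : ℝ) - 1 :=
    fun _ hQ => sub_pos.2 (Nat.one_lt_cast.2 hQ)
  have hne : ({P : Finpartition s | 2 ≤ #P.parts} : Finset _).Nonempty :=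
    ⟨⊥, by simpa [card_bot] using hs⟩
  obtain ⟨P, hP, hmin⟩ := exists_min_image _
    (fun P : Finpartition s => (∑ e ∈ P.crossing, w e) / ((#P.parts : ℝ) - 1)) hne
  have hP2 : 2 ≤ #P.parts := (mem_filter.1 hP).2
  refine ⟨P, hP2, _, (mul_div_cancel₀ _ (hpos P hP2).ne').symm,
    cutBound_of_two_le (card_pos.1 (by omega)) hw fun Q hQ => ?_⟩
  rw [mul_comm, ← le_div_iff₀ (hpos Q hQ)]
  exact hmin Q (by simpa using hQ)

/-- Refining the tight partition `P` at `A` by `Q` adds `|Q| - 1` parts but only the crossing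
edges of `Q`. -/
lemma CutBound.of_mem_parts (hcut : CutBound s μ w) (hw : ∀ e, 0 ≤ w e)
    {P : Finpartition s} (hA : A ∈ P.parts)
    (htight : ∑ e ∈ P.crossing, w e = ((#P.parts : ℝ) - 1) * μ) : CutBound A μ w := by
  intro Q
  have hcard : (#(P.replacePart hA Q).parts : ℝ) + 1 = #Q.parts + #P.parts := by
    exact_mod_cast P.card_replacePart hA Q
  have hsum : ∑ e ∈ (P.replacePart hA Q).crossing, w e
      ≤ ∑ e ∈ P.crossing, w e + ∑ e ∈ Q.crossing, w e := by
    refine (sum_le_sum_of_subset_of_nonneg (P.crossing_replacePart_subset hA Q)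
      fun e _ _ => hw e).trans ?_
    rw [← sum_union_inter]
    exact le_add_of_nonneg_right (sum_nonneg fun e _ => hw e)
  have hsplit : ((#(P.replacePart hA Q).parts : ℝ) - 1) * μ
      = ((#Q.parts : ℝ) - 1) * μ + ((#P.parts : ℝ) - 1) * μ := by
    rw [show (#(P.replacePart hA Q).parts : ℝ) = #Q.parts + #P.parts - 1 by linarith]
    ring
  linarith [hcut (P.replacePart hA Q)]

end TreePacking

namespace Finpartition

variable {α : Type*} [DecidableEq α] {s : Finset α} {μ : ℝ} {w : Finset α → ℝ}
  {P : Finpartition s} {x : Finset α → Finset α → ℝ}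

def glue (P : Finpartition s) (w : Finset α → ℝ) (x : Finset α → Finset α → ℝ)
    (e : Finset α) : ℝ :=
  if e ∈ P.crossing then w e else ∑ A ∈ P.parts, x A e

lemma sum_glue (t : Finset (Finset α)) :
    ∑ e ∈ t, glue P w x e
      = ∑ e ∈ t ∩ P.crossing, w e + ∑ A ∈ P.parts, ∑ e ∈ t \ P.crossing, x A e := by
  unfold glue
  rw [sum_ite, filter_mem_eq_inter, filter_notMem_eq_sdiff, sum_comm]

variable (hx : ∀ A ∈ P.parts, IsTreePacking A μ w (x A))
include hx

lemma glue_le (hw : ∀ e, 0 ≤ w e) (e : Finset α) : glue P w x e ≤ w e := by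
  unfold glue
  split_ifs
  · exact le_rfl
  by_cases h : ∃ A ∈ P.parts, x A e ≠ 0
  · obtain ⟨A, hA, hAe⟩ := h
    have heA := (hx A hA).support e hAe
    rw [sum_eq_single_of_mem A hA fun B hB hBA => ?_]
    · exact (hx A hA).le e
    by_contra hBe
    obtain ⟨a, ha⟩ := heA.2
    exact hBA (P.eq_of_mem_parts hB hA (((hx B hB).support e hBe).1 ha) (heA.1 ha))
  · push Not at h
    rw [sum_eq_zero h]
    exact hw e

lemma glue_nonneg (hw : ∀ e, 0 ≤ w e) (e : Finset α) : 0 ≤ glue P w x e := by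
  unfold glue
  split_ifs
  exacts [hw e, sum_nonneg fun A hA => (hx A hA).nonneg e]

lemma glue_support (hs : s.Nonempty) (e : Finset α) (he : glue P w x e ≠ 0) :
    e ⊆ s ∧ e.Nonempty := by
  unfold glue at he
  split_ifs at he with hcross
  · exact ⟨(mem_crossing.1 hcross).1, nonempty_of_mem_crossing hs hcross⟩
  obtain ⟨A, hA, hAe⟩ := exists_ne_zero_of_sum_ne_zero he
  obtain ⟨heA, hne⟩ := (hx A hA).support e hAe
  exact ⟨heA.trans (P.le hA), hne⟩

lemma cutBound_glue (hw : ∀ e, 0 ≤ w e) (hμ : 0 ≤ μ) (hcut : CutBound s μ w) :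
    CutBound s μ (glue P w x) := by
  intro Q
  obtain ⟨R, hPR, hQR, hcard⟩ := exists_common_coarsening P Q
  set k : Finset α → ℕ := fun A => #{B ∈ Q.parts | ¬Disjoint A B}
  have hR : ((#R.parts : ℝ) - 1) * μ ≤ ∑ e ∈ Q.crossing ∩ P.crossing, w e :=
    (hcut R).trans (sum_le_sum_of_subset_of_nonneg
      (subset_inter (crossing_anti hQR) (crossing_anti hPR)) fun e _ _ => hw e)
  have hparts : ∀ A ∈ P.parts,
      ((k A : ℝ) - 1) * μ ≤ ∑ e ∈ Q.crossing \ P.crossing, x A e := by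
    intro A hA
    have hsub : (Q.restrict (P.le hA)).crossing ⊆ Q.crossing \ P.crossing := fun e he =>
      mem_sdiff.2
        ⟨Q.crossing_restrict_subset (P.le hA) (P.nonempty_of_mem_parts hA) he,
          fun heP => (mem_crossing.1 heP).2 ⟨A, hA, (mem_crossing.1 he).1⟩⟩
    simp only [k, ← card_restrict_parts Q (P.le hA)]
    exact ((hx A hA).cutBound _).trans
      (sum_le_sum_of_subset_of_nonneg hsub fun e _ _ => (hx A hA).nonneg e)
  have hcount : (#Q.parts : ℝ) - 1 ≤ ((#R.parts : ℝ) - 1) + ∑ A ∈ P.parts, ((k A : ℝ) - 1) := by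
    rw [sum_sub_distrib, sum_const, nsmul_one]
    have : ((#P.parts + #Q.parts : ℕ) : ℝ) ≤ ((#R.parts + ∑ A ∈ P.parts, k A : ℕ) : ℝ) := by
      exact_mod_cast hcard
    push_cast at this
    linarith
  rw [sum_glue]
  calc ((#Q.parts : ℝ) - 1) * μ
      ≤ ((#R.parts : ℝ) - 1) * μ + ∑ A ∈ P.parts, ((k A : ℝ) - 1) * μ := by
        rw [← sum_mul, ← add_mul]
        exact mul_le_mul_of_nonneg_right hcount hμ
    _ ≤ _ := add_le_add hR (sum_le_sum hparts)

lemma sum_glue_le (htight : ∑ e ∈ P.crossing, w e = ((#P.parts : ℝ) - 1) * μ) :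
    ∑ e ∈ s.powerset, glue P w x e ≤ ((#s : ℝ) - 1) * μ := by
  have hparts : ∀ A ∈ P.parts, ∑ e ∈ s.powerset \ P.crossing, x A e ≤ ((#A : ℝ) - 1) * μ := by
    intro A hA
    refine le_trans ?_ (hx A hA).sum_le
    rw [sum_subset (powerset_mono.2 (P.le hA)) fun e _ he =>
      not_imp_comm.1 (fun h => mem_powerset.2 ((hx A hA).support e h).1) he]
    exact sum_le_sum_of_subset_of_nonneg sdiff_subset
      fun e _ _ => (hx A hA).nonneg e
  have hcard : ∑ A ∈ P.parts, ((#A : ℝ) - 1) * μ = ((#s : ℝ) - #P.parts) * μ := by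
    rw [← sum_mul, sum_sub_distrib, sum_const, nsmul_one,
      ← P.sum_card_parts, Nat.cast_sum]
  rw [sum_glue, inter_eq_right.2 P.crossing_subset_powerset, htight]
  linarith [sum_le_sum hparts]

lemma isTreePacking_glue (hw : ∀ e, 0 ≤ w e) (hs : s.Nonempty) (hμ : 0 ≤ μ)
    (htight : ∑ e ∈ P.crossing, w e = ((#P.parts : ℝ) - 1) * μ) (hcut : CutBound s μ w) :
    IsTreePacking s μ w (glue P w x) where
  nonneg := glue_nonneg hx hw
  le := glue_le hx hw
  support := glue_support hx hs
  cutBound := cutBound_glue hx hw hμ hcut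
  sum_le := sum_glue_le hx htight

end Finpartition

open Finpartition in
theorem exists_isTreePacking {α : Type*} [DecidableEq α] {w : Finset α → ℝ}
    (hw : ∀ e, 0 ≤ w e) {s : Finset α} (hs : s.Nonempty) {ν : ℝ} (hν : 0 ≤ ν)
    (hcut : CutBound s ν w) : ∃ x, IsTreePacking s ν w x := by
  induction s using strongInduction generalizing ν with
  | H s ih =>
  rcases (one_le_card.2 hs).eq_or_lt with hs1 | hs2
  · exact ⟨0, isTreePacking_zero_of_card_eq_one hw hν hs1.symm⟩
  obtain ⟨P, hP, μ, htight, hμ⟩ := exists_tight_partition hs2 hw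
  have hνμ : ν ≤ μ :=
    le_of_mul_le_mul_left (htight ▸ hcut P) (sub_pos.2 (Nat.one_lt_cast.2 hP))
  have hparts : ∀ A ∈ P.parts, ∃ x, IsTreePacking A μ w x := fun A hA =>
    ih A (ssubset_of_mem_parts hP hA) (P.nonempty_of_mem_parts hA) (hν.trans hνμ)
      (hμ.of_mem_parts hw hA htight)
  choose! x hx using hparts
  exact (isTreePacking_glue hx hw hs (hν.trans hνμ) htight hμ).exists_of_le hν hνμ

section MutualInformation

open Finpartition

variable {M : Type*} [Fintype M] [DecidableEq M] {w x : Finset M → ℝ}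

lemma IP_eq (x : Finset M → ℝ) (P : Finpartition (univ : Finset M)) :
    IP x P = ((#P.parts : ℝ) - 1)⁻¹ * ∑ e ∈ P.crossing, x e := by
  unfold IP crossing
  rw [powerset_univ]

lemma le_IP_iff {P : Finpartition (univ : Finset M)} (hP : 2 ≤ #P.parts) {r : ℝ} :
    r ≤ IP x P ↔ ((#P.parts : ℝ) - 1) * r ≤ ∑ e ∈ P.crossing, x e := by
  rw [IP_eq, ← div_eq_inv_mul, le_div_iff₀ (sub_pos.2 (Nat.one_lt_cast.2 hP)), mul_comm]

lemma MMI_le_IP {P : Finpartition (univ : Finset M)} (hP : 2 ≤ #P.parts) : MMI x ≤ IP x P := by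
  refine csInf_le ?_ ⟨P, hP, rfl⟩
  refine (Set.finite_range fun P : Finpartition (univ : Finset M) => IP x P).bddBelow.mono ?_
  rintro _ ⟨P, -, rfl⟩
  exact ⟨P, rfl⟩

lemma le_MMI (hm : 2 ≤ Fintype.card M) {r : ℝ}
    (h : ∀ P : Finpartition (univ : Finset M), 2 ≤ #P.parts → r ≤ IP x P) : r ≤ MMI x := by
  refine le_csInf ⟨IP x ⊥, ⊥, by rwa [card_bot, card_univ], rfl⟩ ?_
  rintro _ ⟨P, hP, rfl⟩
  exact h P hP

lemma MMI_nonneg (hm : 2 ≤ Fintype.card M) (hx : ∀ e, 0 ≤ x e) : 0 ≤ MMI x :=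
  le_MMI hm fun _ hP => (le_IP_iff hP).2 (by simpa using sum_nonneg fun e _ => hx e)

lemma cutBound_MMI (hm : 2 ≤ Fintype.card M) (hx : ∀ e, 0 ≤ x e) :
    CutBound univ (MMI x) x :=
  have : Nonempty M := Fintype.card_pos_iff.1 (by omega)
  cutBound_of_two_le univ_nonempty hx fun _ hP => (le_IP_iff hP).1 (MMI_le_IP hP)

lemma MMI_eq_of_cutBound (hm : 2 ≤ Fintype.card M) (hxw : ∀ e, x e ≤ w e)
    (hx : CutBound univ (MMI w) x) : MMI x = MMI w :=
  le_antisymm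
    (le_MMI hm fun _ hP => (le_IP_iff hP).2
      (((le_IP_iff hP).1 (MMI_le_IP hP)).trans (sum_le_sum fun e _ => hxw e)))
    (le_MMI hm fun P hP => (le_IP_iff hP).2 (hx P))

lemma card_sub_one_mul_MMI_le_sum (hm : 2 ≤ Fintype.card M) (hx : ∀ e, 0 ≤ x e) :
    ((Fintype.card M : ℝ) - 1) * MMI x ≤ ∑ e, x e := by
  have hbot : 2 ≤ #(⊥ : Finpartition (univ : Finset M)).parts := by rwa [card_bot, card_univ]
  have h := (le_IP_iff hbot).1 (MMI_le_IP (x := x) hbot)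
  rw [card_bot, card_univ] at h
  exact h.trans (sum_le_sum_of_subset_of_nonneg (subset_univ _) fun e _ _ => hx e)

end MutualInformation

theorem graphical_upper_bound_general {M : Type*} [Fintype M] [DecidableEq M]
    (hm : 2 ≤ Fintype.card M)
    (w : Finset M → ℝ) (hw : ∀ e, 0 ≤ w e)
    (xs : Finset M → ℝ) (hxs : xs ∈ Gamma w)
    (hopt : ∀ x ∈ Gamma w, (∑ e : Finset M, xs e) ≤ ∑ e : Finset M, x e) :
    (∑ e : Finset M, xs e) - MMI w = ((Fintype.card M : ℝ) - 2) * MMI w := by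
  have : Nonempty M := Fintype.card_pos_iff.1 (by omega)
  obtain ⟨x, hx⟩ :=
    exists_isTreePacking hw univ_nonempty (MMI_nonneg hm hw) (cutBound_MMI hm hw)
  have hxΓ : x ∈ Gamma w := ⟨hx.nonneg, hx.le, MMI_eq_of_cutBound hm hx.le hx.cutBound⟩
  have hupper : ∑ e, xs e ≤ ((Fintype.card M : ℝ) - 1) * MMI w := by
    have := hx.sum_le
    rw [powerset_univ, card_univ] at this
    exact (hopt x hxΓ).trans this
  have hlower := card_sub_one_mul_MMI_le_sum hm hxs.1
  rw [hxs.2.2] at hlower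
  linarith

/-- **Theorem 2.** For a graphical source on `(M, w)` with `m = |M| ≥ 2`,
if `x*` minimizes `∑_e x e` over the capacity-preserving fractional packings `Γ`, then
`∑_e x* e - I(w) = (m - 2) · I(w)`; i.e., the upper bound on the communication complexity
reduces to `(m-2) I(X_M)`. -/
theorem graphical_upper_bound {M : Type*} [Fintype M] [DecidableEq M]
    (hm : 2 ≤ Fintype.card M)
    (w : Finset M → ℝ) (hw : ∀ e, 0 ≤ w e)
    (h2 : ∀ e, 0 < w e → e.card = 2)
    (xs : Finset M → ℝ) (hxs : xs ∈ Gamma w)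
    (hopt : ∀ x ∈ Gamma w, (∑ e : Finset M, xs e) ≤ ∑ e : Finset M, x e) :
    (∑ e : Finset M, xs e) - MMI w = ((Fintype.card M : ℝ) - 2) * MMI w :=
  graphical_upper_bound_general hm w hw xs hxs hopt
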